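/- Let E̅₁ be an upper expectation functional, E_₂ a lower expectation functional, and T̅ an upper transition operator with weak coefficient of ergodicity ρ(T̅). Then d(E̅₁∘T̅, E_₂∘T̅) ≤ d(E̅₁, E_₂)·ρ(T̅), where d(E̅₁, E_₂) = max_{f∈L₁} (E̅₁(f) - E_₂(f)). -/

import Mathlib

open Finset Set

noncomputable section

/-- Functions with values in [0,1]. -/
def L1 (X : Type*) : Set (X → ℝ) := {f | ∀ x, 0 ≤ f x ∧ f x ≤ 1}

/-- Probability mass function on a finite set. -/
def IsPMF {X : Type*} [Fintype X] (p : X → ℝ) : Prop :=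
  (∀ x, 0 ≤ p x) ∧ ∑ x, p x = 1

/-- A credal set: nonempty compact convex set of pmfs. -/
def IsCredal {X : Type*} [Fintype X] (M : Set (X → ℝ)) : Prop :=
  M.Nonempty ∧ IsCompact M ∧ Convex ℝ M ∧ ∀ p ∈ M, IsPMF p

/-- Linear expectation with respect to a pmf. -/
def linExp {X : Type*} [Fintype X] (p f : X → ℝ) : ℝ := ∑ x, p x * f x

/-- Upper expectation functional of a credal set. -/
def upperExp {X : Type*} [Fintype X] (M : Set (X → ℝ)) (f : X → ℝ) : ℝ :=
  sSup ((fun p => linExp p f) '' M)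

/-- Lower expectation functional of a credal set. -/
def lowerExp {X : Type*} [Fintype X] (M : Set (X → ℝ)) (f : X → ℝ) : ℝ :=
  sInf ((fun p => linExp p f) '' M)

/-- Chebyshev (sup) distance between functions. -/
def dCheb {X : Type*} (f g : X → ℝ) : ℝ := ⨆ x, |f x - g x|

/-- Distance between two (upper) expectation functionals. -/
def dFun {X : Type*} (F G : (X → ℝ) → ℝ) : ℝ :=
  sSup ((fun f => |F f - G f|) '' L1 X)

/-- Distance between an upper and a lower expectation functional. -/
def dUL {X : Type*} (F G : (X → ℝ) → ℝ) : ℝ :=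
  sSup ((fun f => F f - G f) '' L1 X)

/-- Upper transition operator: rows are upper expectation functionals. -/
def IsUpperTrans {X : Type*} [Fintype X] (T : (X → ℝ) → (X → ℝ)) : Prop :=
  ∃ M : X → Set (X → ℝ), (∀ x, IsCredal (M x)) ∧ ∀ f x, T f x = upperExp (M x) f

/-- Matching pair of upper and lower transition operators from the same credal sets. -/
def IsTransPair {X : Type*} [Fintype X] (T Tl : (X → ℝ) → (X → ℝ)) : Prop :=
  ∃ M : X → Set (X → ℝ), (∀ x, IsCredal (M x)) ∧
    (∀ f x, T f x = upperExp (M x) f) ∧ (∀ f x, Tl f x = lowerExp (M x) f)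

/-- Distance between two (upper) transition operators. -/
def dOp {X : Type*} (T T' : (X → ℝ) → (X → ℝ)) : ℝ :=
  sSup ((fun f => dCheb (T f) (T' f)) '' L1 X)

/-- Imprecision distance between an upper and a lower transition operator. -/
def dOpUL {X : Type*} (T Tl : (X → ℝ) → (X → ℝ)) : ℝ :=
  sSup ((fun f => ⨆ x, (T f x - Tl f x)) '' L1 X)

/-- Weak coefficient of ergodicity. -/
def rho {X : Type*} (T : (X → ℝ) → (X → ℝ)) : ℝ :=
  sSup {r | ∃ f ∈ L1 X, ∃ x y : X, r = |T f x - T f y|}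

/-! The image `g = T̅ f` of any `f ∈ L₁` is an affine image `g = c • g' + m` of some `g' ∈ L₁`,
with `m = min g` and `c = max g - min g ≤ ρ(T̅)`. Upper and lower expectations commute with
nonnegative affine maps, so `E̅₁ g - E_₂ g = c (E̅₁ g' - E_₂ g') ≤ ρ(T̅) d(E̅₁, E_₂)`. -/

section LinExp

variable {X : Type*} [Fintype X] {p : X → ℝ}

lemma linExp_affine (hp : ∑ x, p x = 1) (c m : ℝ) (g : X → ℝ) :
    linExp p (fun x => c * g x + m) = c * linExp p g + m := by
  simp only [linExp, mul_add, Finset.sum_add_distrib, ← Finset.sum_mul, hp, one_mul,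
    Finset.mul_sum]
  exact congrArg (· + m) (Finset.sum_congr rfl fun x _ => by ring)

lemma continuous_linExp (f : X → ℝ) : Continuous fun p : X → ℝ => linExp p f := by
  unfold linExp
  fun_prop

lemma linExp_le_of_le (hp : IsPMF p) {f : X → ℝ} {b : ℝ} (hf : ∀ x, f x ≤ b) :
    linExp p f ≤ b :=
  calc linExp p f ≤ ∑ x, p x * b :=
        Finset.sum_le_sum fun x _ => mul_le_mul_of_nonneg_left (hf x) (hp.1 x)
    _ = b := by rw [← Finset.sum_mul, hp.2, one_mul]

lemma le_linExp_of_le (hp : IsPMF p) {f : X → ℝ} {a : ℝ} (hf : ∀ x, a ≤ f x) :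
    a ≤ linExp p f :=
  calc a = ∑ x, p x * a := by rw [← Finset.sum_mul, hp.2, one_mul]
    _ ≤ linExp p f := Finset.sum_le_sum fun x _ => mul_le_mul_of_nonneg_left (hf x) (hp.1 x)

end LinExp

namespace IsCredal

variable {X : Type*} [Fintype X] {M : Set (X → ℝ)}

lemma bddAbove_linExp (hM : IsCredal M) (f : X → ℝ) :
    BddAbove ((fun p => linExp p f) '' M) :=
  (hM.2.1.image (continuous_linExp f)).bddAbove

lemma bddBelow_linExp (hM : IsCredal M) (f : X → ℝ) :
    BddBelow ((fun p => linExp p f) '' M) :=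
  (hM.2.1.image (continuous_linExp f)).bddBelow

lemma linExp_image_affine (hM : IsCredal M) (c m : ℝ) (g : X → ℝ) :
    (fun p => linExp p (fun x => c * g x + m)) '' M =
      (fun t => c * t + m) '' ((fun p => linExp p g) '' M) := by
  rw [Set.image_image]
  exact Set.image_congr fun p hp => linExp_affine (hM.2.2.2 p hp).2 c m g

lemma upperExp_affine (hM : IsCredal M) {c : ℝ} (hc : 0 ≤ c) (m : ℝ) (g : X → ℝ) :
    upperExp M (fun x => c * g x + m) = c * upperExp M g + m := by
  rw [upperExp, upperExp, hM.linExp_image_affine]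
  exact ((Monotone.map_csSup_of_continuousAt (by fun_prop)
    (fun s t hst => by gcongr) (hM.1.image _) (hM.bddAbove_linExp g))).symm

lemma lowerExp_affine (hM : IsCredal M) {c : ℝ} (hc : 0 ≤ c) (m : ℝ) (g : X → ℝ) :
    lowerExp M (fun x => c * g x + m) = c * lowerExp M g + m := by
  rw [lowerExp, lowerExp, hM.linExp_image_affine]
  exact ((Monotone.map_csInf_of_continuousAt (by fun_prop)
    (fun s t hst => by gcongr) (hM.1.image _) (hM.bddBelow_linExp g))).symm

lemma upperExp_const (hM : IsCredal M) (m : ℝ) : upperExp M (fun _ => m) = m := by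
  simpa using hM.upperExp_affine le_rfl m 0

lemma lowerExp_const (hM : IsCredal M) (m : ℝ) : lowerExp M (fun _ => m) = m := by
  simpa using hM.lowerExp_affine le_rfl m 0

lemma upperExp_le_of_le (hM : IsCredal M) {f : X → ℝ} {b : ℝ} (hf : ∀ x, f x ≤ b) :
    upperExp M f ≤ b :=
  csSup_le (hM.1.image _) (Set.forall_mem_image.2 fun p hp => linExp_le_of_le (hM.2.2.2 p hp) hf)

lemma le_upperExp_of_le (hM : IsCredal M) {f : X → ℝ} {a : ℝ} (hf : ∀ x, a ≤ f x) :
    a ≤ upperExp M f :=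
  let ⟨p, hp⟩ := hM.1
  (le_linExp_of_le (hM.2.2.2 p hp) hf).trans
    (le_csSup (hM.bddAbove_linExp f) (Set.mem_image_of_mem _ hp))

lemma le_lowerExp_of_le (hM : IsCredal M) {f : X → ℝ} {a : ℝ} (hf : ∀ x, a ≤ f x) :
    a ≤ lowerExp M f :=
  le_csInf (hM.1.image _) (Set.forall_mem_image.2 fun p hp => le_linExp_of_le (hM.2.2.2 p hp) hf)

lemma upperExp_mem_Icc (hM : IsCredal M) {f : X → ℝ} (hf : f ∈ L1 X) :
    upperExp M f ∈ Set.Icc (0 : ℝ) 1 :=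
  ⟨hM.le_upperExp_of_le fun x => (hf x).1, hM.upperExp_le_of_le fun x => (hf x).2⟩

end IsCredal

section Distances

variable {X : Type*} [Fintype X] {M1 M2 : Set (X → ℝ)}

lemma sub_le_dUL (h1 : IsCredal M1) (h2 : IsCredal M2) {f : X → ℝ} (hf : f ∈ L1 X) :
    upperExp M1 f - lowerExp M2 f ≤ dUL (upperExp M1) (lowerExp M2) := by
  refine le_csSup ⟨1, Set.forall_mem_image.2 fun g hg => ?_⟩ (Set.mem_image_of_mem _ hf)
  linarith [h1.upperExp_le_of_le fun x => (hg x).2, h2.le_lowerExp_of_le fun x => (hg x).1]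

lemma dUL_nonneg (h1 : IsCredal M1) (h2 : IsCredal M2) :
    0 ≤ dUL (upperExp M1) (lowerExp M2) := by
  have h := sub_le_dUL h1 h2 (f := fun _ => 0) fun _ => ⟨le_rfl, zero_le_one⟩
  rwa [h1.upperExp_const, h2.lowerExp_const, sub_zero] at h

lemma IsUpperTrans.mapsTo_L1 {T : (X → ℝ) → (X → ℝ)} (hT : IsUpperTrans T) :
    Set.MapsTo T (L1 X) (L1 X) := by
  obtain ⟨M, hM, hTM⟩ := hT
  intro f hf x
  rw [hTM]
  exact (hM x).upperExp_mem_Icc hf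

lemma IsUpperTrans.sub_le_rho {T : (X → ℝ) → (X → ℝ)} (hT : IsUpperTrans T) {f : X → ℝ}
    (hf : f ∈ L1 X) (x y : X) : T f x - T f y ≤ rho T := by
  have hbdd : BddAbove {r | ∃ f ∈ L1 X, ∃ x y : X, r = |T f x - T f y|} := by
    refine ⟨1, ?_⟩
    rintro _ ⟨g, hg, x, y, rfl⟩
    have hx := hT.mapsTo_L1 hg x
    have hy := hT.mapsTo_L1 hg y
    exact abs_sub_le_iff.2 ⟨by linarith [hx.2, hy.1], by linarith [hx.1, hy.2]⟩
  exact (le_abs_self _).trans (le_csSup hbdd ⟨f, hf, x, y, rfl⟩)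

lemma IsUpperTrans.rho_nonneg [Nonempty X] {T : (X → ℝ) → (X → ℝ)} (hT : IsUpperTrans T) :
    0 ≤ rho T := by
  obtain ⟨x⟩ := ‹Nonempty X›
  simpa using hT.sub_le_rho (f := fun _ => 0) (fun _ => ⟨le_rfl, zero_le_one⟩) x x

end Distances

lemma exists_mem_L1_eq_affine {X : Type*} [Fintype X] [Nonempty X] (g : X → ℝ) :
    ∃ g' ∈ L1 X, ∃ x y : X, g y ≤ g x ∧ g = fun z => (g x - g y) * g' z + g y := by
  obtain ⟨x, -, hx⟩ := Finset.exists_max_image Finset.univ g Finset.univ_nonempty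
  obtain ⟨y, -, hy⟩ := Finset.exists_min_image Finset.univ g Finset.univ_nonempty
  have hyx : g y ≤ g x := hy x (Finset.mem_univ _)
  refine ⟨fun z => (g z - g y) / (g x - g y), fun z => ⟨?_, ?_⟩, x, y, hyx, funext fun z => ?_⟩
  · exact div_nonneg (sub_nonneg.2 (hy z (Finset.mem_univ _))) (sub_nonneg.2 hyx)
  · exact div_le_one_of_le₀ (sub_le_sub_right (hx z (Finset.mem_univ _)) _) (sub_nonneg.2 hyx)
  · rcases hyx.eq_or_lt with hxy | hxy
    · -- `g` is constant, and the division by `0` is harmless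
      have := hx z (Finset.mem_univ _); have := hy z (Finset.mem_univ _)
      simp only [hxy, sub_self, zero_mul, zero_add]
      linarith
    · rw [mul_div_cancel₀ _ (sub_pos.2 hxy).ne']
      ring

theorem stmt10 {X : Type*} [Fintype X] [Nonempty X]
    (M1 M2 : Set (X → ℝ)) (h1 : IsCredal M1) (h2 : IsCredal M2)
    (T : (X → ℝ) → (X → ℝ)) (hT : IsUpperTrans T) :
    dUL (fun f => upperExp M1 (T f)) (fun f => lowerExp M2 (T f)) ≤
      dUL (upperExp M1) (lowerExp M2) * rho T := by
  refine Real.sSup_le (Set.forall_mem_image.2 fun f hf => ?_)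
    (mul_nonneg (dUL_nonneg h1 h2) hT.rho_nonneg)
  obtain ⟨g, hg, x, y, hyx, hTf⟩ := exists_mem_L1_eq_affine (T f)
  have hc : 0 ≤ T f x - T f y := sub_nonneg.2 hyx
  dsimp only
  rw [hTf, h1.upperExp_affine hc, h2.lowerExp_affine hc]
  calc _ = (T f x - T f y) * (upperExp M1 g - lowerExp M2 g) := by ring
    _ ≤ (T f x - T f y) * dUL (upperExp M1) (lowerExp M2) :=
        mul_le_mul_of_nonneg_left (sub_le_dUL h1 h2 hg) hc
    _ ≤ rho T * dUL (upperExp M1) (lowerExp M2) :=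
        mul_le_mul_of_nonneg_right (hT.sub_le_rho hf x y) (dUL_nonneg h1 h2)
    _ = _ := mul_comm _ _
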